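/- For a forecast distribution function F on ℝ and observation u ∈ ℝ, with CRPS(F, u) = ∫_ℝ (F(y) - 1{y ≥ u})^2 dy, if F(y) = 0 for y ≤ g, F(y) = 1 - p + p·L(y - g + γ) for y > g (with L a lognormal CDF with parameters m, v, p ∈ [0,1], γ > 0), and u ≥ g, then CRPS(F, u) = (u - g) + 2p ∫_γ^{u-g+γ} (L(z) - 1) dz + p² ∫_γ^∞ (L(z) - 1)² dz. -/

import Mathlib

open MeasureTheory Set Real

noncomputable def stdNormalCDF (x : ℝ) : ℝ :=
  ((ProbabilityTheory.gaussianReal 0 1) (Set.Iic x)).toReal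

noncomputable def lognormalCDF (m v z : ℝ) : ℝ :=
  if 0 < z then stdNormalCDF ((Real.log z - m) / Real.sqrt v) else 0

lemma stdNormalCDF_mono : Monotone stdNormalCDF := fun _ _ hab =>
  ENNReal.toReal_mono (measure_ne_top _ _) (measure_mono (Set.Iic_subset_Iic.2 hab))

lemma stdNormalCDF_nonneg (x : ℝ) : 0 ≤ stdNormalCDF x := ENNReal.toReal_nonneg

lemma stdNormalCDF_le_one (x : ℝ) : stdNormalCDF x ≤ 1 := by
  have h := prob_le_one (μ := ProbabilityTheory.gaussianReal 0 1) (s := Set.Iic x)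
  simpa [stdNormalCDF] using ENNReal.toReal_mono ENNReal.one_ne_top h

lemma lognormalCDF_nonneg (m v z : ℝ) : 0 ≤ lognormalCDF m v z := by
  unfold lognormalCDF; split <;> simp [stdNormalCDF_nonneg]

lemma lognormalCDF_le_one (m v z : ℝ) : lognormalCDF m v z ≤ 1 := by
  unfold lognormalCDF; split <;> simp [stdNormalCDF_le_one]

lemma lognormalCDF_mono (m v : ℝ) : Monotone (lognormalCDF m v) := by
  intro a b hab
  unfold lognormalCDF
  split
  · rename_i ha
    rw [if_pos (ha.trans_le hab)]
    rcases (Real.sqrt_nonneg v).eq_or_lt with h | h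
    · rw [← h]; simp
    · refine stdNormalCDF_mono ?_
      have := Real.log_le_log ha hab
      gcongr
  · split
    · exact stdNormalCDF_nonneg _
    · exact le_refl _

lemma integral_exp_neg_mul_Ioi (l t : ℝ) (hl : 0 < l) :
    ∫ x in Set.Ioi t, Real.exp (-l * x) = Real.exp (-l * t) / l := by
  have hderiv : ∀ x ∈ Set.Ici t, HasDerivAt (fun x => -Real.exp (-l * x) / l) (Real.exp (-l * x)) x := by
    intro x _
    have h1 : HasDerivAt (fun x : ℝ => -l * x) (-l) x := by
      simpa using (hasDerivAt_id x).const_mul (-l)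
    have h2 := (h1.exp).neg.div_const l
    exact h2.congr_deriv (by rw [div_eq_iff hl.ne']; ring)
  have hint : IntegrableOn (fun x => Real.exp (-l * x)) (Set.Ioi t) :=
    exp_neg_integrableOn_Ioi t hl
  have htends : Filter.Tendsto (fun x => -Real.exp (-l * x) / l) Filter.atTop (nhds (0:ℝ)) := by
    have h1 : Filter.Tendsto (fun x : ℝ => -l * x) Filter.atTop Filter.atBot := by
      have := Filter.Tendsto.const_mul_atTop hl (Filter.tendsto_id (α := ℝ))
      simpa [neg_mul] using Filter.tendsto_neg_atBot_iff.mpr this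
    have := (Real.tendsto_exp_atBot.comp h1).neg.div_const l
    simpa using this
  rw [MeasureTheory.integral_Ioi_of_hasDerivAt_of_tendsto' hderiv hint htends]
  ring

lemma stdNormal_tail (l t : ℝ) (hl : 0 < l) :
    1 - stdNormalCDF t ≤ (Real.sqrt (2 * π))⁻¹ * Real.exp (l ^ 2 / 2) * (Real.exp (-l * t) / l) := by
  set μ := ProbabilityTheory.gaussianReal 0 1 with hμ
  have hsplit : stdNormalCDF t + (μ (Set.Ioi t)).toReal = 1 := by
    have h : μ (Set.Iic t) + μ (Set.Ioi t) = 1 := by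
      rw [← measure_union (Set.Iic_disjoint_Ioi le_rfl) measurableSet_Ioi, Set.Iic_union_Ioi,
        measure_univ]
    have := congrArg ENNReal.toReal h
    rwa [ENNReal.toReal_add (measure_ne_top _ _) (measure_ne_top _ _), ENNReal.toReal_one] at this
  have heq : (μ (Set.Ioi t)).toReal = ∫ x in Set.Ioi t, ProbabilityTheory.gaussianPDFReal 0 1 x := by
    rw [hμ, ProbabilityTheory.gaussianReal_apply_eq_integral 0 one_ne_zero,
      ENNReal.toReal_ofReal (setIntegral_nonneg measurableSet_Ioi fun x _ =>
        ProbabilityTheory.gaussianPDFReal_nonneg 0 1 x)]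
  have hbound : ∀ x : ℝ, ProbabilityTheory.gaussianPDFReal 0 1 x
      ≤ (Real.sqrt (2 * π))⁻¹ * Real.exp (l ^ 2 / 2) * Real.exp (-l * x) := by
    intro x
    have h1 : ProbabilityTheory.gaussianPDFReal 0 1 x
        = (Real.sqrt (2 * π))⁻¹ * Real.exp (-x ^ 2 / 2) := by
      simp [ProbabilityTheory.gaussianPDFReal]
    rw [h1, mul_assoc, ← Real.exp_add]
    have h2 : Real.exp (-x ^ 2 / 2) ≤ Real.exp (l ^ 2 / 2 + -l * x) := by
      apply Real.exp_le_exp.2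
      nlinarith [sq_nonneg (x - l)]
    have h3 : (0:ℝ) ≤ (Real.sqrt (2 * π))⁻¹ := by positivity
    exact mul_le_mul_of_nonneg_left h2 h3
  have hmono : ∫ x in Set.Ioi t, ProbabilityTheory.gaussianPDFReal 0 1 x
      ≤ ∫ x in Set.Ioi t, (Real.sqrt (2 * π))⁻¹ * Real.exp (l ^ 2 / 2) * Real.exp (-l * x) := by
    apply setIntegral_mono_on (ProbabilityTheory.integrable_gaussianPDFReal 0 1).integrableOn
      ((exp_neg_integrableOn_Ioi t hl).const_mul _) measurableSet_Ioi
    exact fun x _ => hbound x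
  have hval : ∫ x in Set.Ioi t, (Real.sqrt (2 * π))⁻¹ * Real.exp (l ^ 2 / 2) * Real.exp (-l * x)
      = (Real.sqrt (2 * π))⁻¹ * Real.exp (l ^ 2 / 2) * (Real.exp (-l * t) / l) := by
    rw [integral_const_mul, integral_exp_neg_mul_Ioi l t hl]
  linarith [hsplit, heq ▸ hmono.trans_eq hval]

lemma lognormal_tail (m v : ℝ) (hv : 0 < v) :
    ∃ C : ℝ, 0 ≤ C ∧ ∀ z : ℝ, 0 < z → 1 - lognormalCDF m v z ≤ C * z ^ (-2 : ℝ) := by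
  set l := 2 * Real.sqrt v with hldef
  have hl : 0 < l := by positivity
  refine ⟨(Real.sqrt (2 * π))⁻¹ * Real.exp (l ^ 2 / 2) * (Real.exp (2 * m) / l), by positivity,
    fun z hz => ?_⟩
  have hst : Real.sqrt v ≠ 0 := by positivity
  have h := stdNormal_tail l ((Real.log z - m) / Real.sqrt v) hl
  rw [lognormalCDF, if_pos hz]
  refine h.trans (le_of_eq ?_)
  have hlt : -l * ((Real.log z - m) / Real.sqrt v) = 2 * m + Real.log z * (-2) := by
    rw [hldef]; field_simp; ring
  rw [hlt, Real.exp_add, Real.rpow_def_of_pos hz (-2)]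
  ring

lemma lognormalCDF_measurable (m v : ℝ) : Measurable (lognormalCDF m v) :=
  (lognormalCDF_mono m v).measurable

lemma sq_tail_integrableOn (m v γ : ℝ) (hv : 0 < v) (hγ : 0 < γ) :
    IntegrableOn (fun z => (lognormalCDF m v z - 1) ^ 2) (Set.Ioi γ) := by
  obtain ⟨C, hC0, hC⟩ := lognormal_tail m v hv
  have hg : IntegrableOn (fun z : ℝ => C * z ^ (-2 : ℝ)) (Set.Ioi γ) :=
    (integrableOn_Ioi_rpow_of_lt (by norm_num) hγ).const_mul C
  refine Integrable.mono hg
    ((((lognormalCDF_measurable m v).sub measurable_const).pow_const 2).aestronglyMeasurable) ?_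
  refine (ae_restrict_iff' measurableSet_Ioi).2 (Filter.Eventually.of_forall fun z hz => ?_)
  have hz0 : (0:ℝ) < z := hγ.trans hz
  have h1 : lognormalCDF m v z ≤ 1 := lognormalCDF_le_one m v z
  have h2 : 0 ≤ lognormalCDF m v z := lognormalCDF_nonneg m v z
  have h3 := hC z hz0
  have h4 : (0:ℝ) < z ^ (-2 : ℝ) := Real.rpow_pos_of_pos hz0 _
  rw [Real.norm_eq_abs, Real.norm_eq_abs, abs_of_nonneg (sq_nonneg _),
    abs_of_nonneg (by positivity)]
  nlinarith

theorem stmt6 (g γ p m v u : ℝ) (hγ : 0 < γ) (hp0 : 0 ≤ p) (hp1 : p ≤ 1) (hv : 0 < v)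
    (hu : g ≤ u) (F : ℝ → ℝ)
    (hF0 : ∀ y, y ≤ g → F y = 0)
    (hF1 : ∀ y, g < y → F y = 1 - p + p * lognormalCDF m v (y - g + γ)) :
    ∫ y, (F y - (if u ≤ y then (1 : ℝ) else 0)) ^ 2 =
      (u - g) + 2 * p * (∫ z in Set.Ioc γ (u - g + γ), (lognormalCDF m v z - 1))
        + p ^ 2 * (∫ z in Set.Ioi γ, (lognormalCDF m v z - 1) ^ 2) := by
  have hLmeas := lognormalCDF_measurable m v
  set T := u - g + γ with hTdef
  have hγT : γ ≤ T := by rw [hTdef]; linarith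
  -- z-side integrabilities
  have hIsq := sq_tail_integrableOn m v γ hv hγ
  have hIsqIoc : IntegrableOn (fun z => (lognormalCDF m v z - 1) ^ 2) (Set.Ioc γ T) :=
    hIsq.mono_set Set.Ioc_subset_Ioi_self
  have hIsqIoiT : IntegrableOn (fun z => (lognormalCDF m v z - 1) ^ 2) (Set.Ioi T) :=
    hIsq.mono_set (Set.Ioi_subset_Ioi hγT)
  have hILIoc : IntegrableOn (fun z => lognormalCDF m v z - 1) (Set.Ioc γ T) := by
    apply Measure.integrableOn_of_bounded measure_Ioc_lt_top.ne
      ((hLmeas.sub measurable_const).aestronglyMeasurable) (M := 1)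
    refine Filter.Eventually.of_forall fun z => ?_
    rw [Real.norm_eq_abs, abs_le]
    simp only [Pi.sub_apply]
    exact ⟨by linarith [lognormalCDF_nonneg m v z], by linarith [lognormalCDF_le_one m v z]⟩
  set q1 : ℝ → ℝ := fun z => (1 - p + p * lognormalCDF m v z) ^ 2 with hq1
  set q2 : ℝ → ℝ := fun z => p ^ 2 * (lognormalCDF m v z - 1) ^ 2 with hq2
  set ψ : ℝ → ℝ := fun y =>
    Set.indicator (Set.Ioc g u) (fun y => q1 (y - g + γ)) y
      + Set.indicator (Set.Ioi u) (fun y => q2 (y - g + γ)) y with hψ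
  -- a.e. equality of integrand with ψ
  have hae : (fun y => (F y - (if u ≤ y then (1 : ℝ) else 0)) ^ 2) =ᵐ[volume] ψ := by
    have hcnt : ∀ᵐ y : ℝ, y ∉ ({g, u} : Set ℝ) :=
      Set.Countable.ae_notMem (Set.to_countable _) _
    filter_upwards [hcnt] with y hy
    simp only [Set.mem_insert_iff, Set.mem_singleton_iff, not_or] at hy
    obtain ⟨hyg, hyu⟩ := hy
    rcases lt_or_gt_of_ne hyg with h | h
    · have h1 : ¬ u ≤ y := fun hc => absurd (hc.trans_lt h) (not_lt.2 hu)
      rw [hF0 y h.le, if_neg h1]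
      simp only [hψ]
      have m1 : y ∉ Set.Ioc g u := fun hc => absurd hc.1 (not_lt.2 h.le)
      have m2 : y ∉ Set.Ioi u := fun hc => h1 (le_of_lt hc)
      rw [Set.indicator_of_notMem m1, Set.indicator_of_notMem m2]
      ring
    · rcases lt_or_gt_of_ne hyu with h2 | h2
      · rw [hF1 y h, if_neg (not_le.2 h2)]
        simp only [hψ]
        have m1 : y ∈ Set.Ioc g u := ⟨h, h2.le⟩
        have m2 : y ∉ Set.Ioi u := fun hc => absurd hc (not_lt.2 h2.le)
        rw [Set.indicator_of_mem m1, Set.indicator_of_notMem m2]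
        ring
      · have hgy : g < y := lt_of_le_of_lt hu h2
        rw [hF1 y hgy, if_pos h2.le]
        simp only [hψ]
        have m1 : y ∉ Set.Ioc g u := fun hc => absurd hc.2 (not_le.2 h2)
        have m2 : y ∈ Set.Ioi u := h2
        rw [Set.indicator_of_notMem m1, Set.indicator_of_mem m2]
        simp only [hq2]
        ring
  -- translated indicator rewriting for the Ioi part
  have hind2eq : (Set.indicator (Set.Ioi u) fun y => q2 (y - g + γ))
      = fun y => Set.indicator (Set.Ioi T) q2 (y + (γ - g)) := by
    funext y
    by_cases hy : y ∈ Set.Ioi u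
    · have m2 : y + (γ - g) ∈ Set.Ioi T := by
        rw [Set.mem_Ioi] at hy ⊢; rw [hTdef]; linarith
      rw [Set.indicator_of_mem hy, Set.indicator_of_mem m2]
      congr 1
      ring
    · have m2 : y + (γ - g) ∉ Set.Ioi T := by
        rw [Set.mem_Ioi] at hy ⊢; rw [hTdef]; intro hc; exact hy (by linarith)
      rw [Set.indicator_of_notMem hy, Set.indicator_of_notMem m2]
  have hITq2 : Integrable (Set.indicator (Set.Ioi T) q2) := by
    rw [integrable_indicator_iff measurableSet_Ioi]
    exact hIsqIoiT.const_mul (p ^ 2)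
  -- integrability of the two indicator pieces
  have hI1 : Integrable (Set.indicator (Set.Ioc g u) fun y => q1 (y - g + γ)) := by
    rw [integrable_indicator_iff measurableSet_Ioc]
    apply Measure.integrableOn_of_bounded measure_Ioc_lt_top.ne (M := 1)
    · exact ((((hLmeas.comp (by fun_prop)).const_mul p).const_add (1 - p)).pow_const
        2).aestronglyMeasurable
    · refine Filter.Eventually.of_forall fun y => ?_
      have h0 := lognormalCDF_nonneg m v (y - g + γ)
      have h1 := lognormalCDF_le_one m v (y - g + γ)
      have h2 : 0 ≤ p * lognormalCDF m v (y - g + γ) := mul_nonneg hp0 h0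
      have h3 : p * lognormalCDF m v (y - g + γ) ≤ p := by
        nlinarith
      simp only [hq1, Real.norm_eq_abs]
      rw [abs_of_nonneg (sq_nonneg _)]
      nlinarith
  have hI2 : Integrable (Set.indicator (Set.Ioi u) fun y => q2 (y - g + γ)) := by
    rw [hind2eq]
    exact ((measurePreserving_add_right (volume : Measure ℝ) (γ - g)).integrable_comp
      hITq2.aestronglyMeasurable).2 hITq2
  -- compute LHS
  rw [integral_congr_ae hae, hψ]
  rw [integral_add hI1 hI2, integral_indicator measurableSet_Ioc,
    integral_indicator measurableSet_Ioi]
  -- piece 1 : Ioc g u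
  have hA : ∫ y in Set.Ioc g u, q1 (y - g + γ) = ∫ z in Set.Ioc γ T, q1 z := by
    rw [← intervalIntegral.integral_of_le hu, ← intervalIntegral.integral_of_le hγT]
    have : (fun y => q1 (y - g + γ)) = fun y => q1 (y + (γ - g)) := by funext y; congr 1; ring
    rw [intervalIntegral.integral_congr (fun y _ => congrFun this y),
      intervalIntegral.integral_comp_add_right q1 (γ - g)]
    have e1 : g + (γ - g) = γ := by ring
    have e2 : u + (γ - g) = T := by rw [hTdef]; ring
    rw [e1, e2]
  -- piece 2 : Ioi u
  have hB : ∫ y in Set.Ioi u, q2 (y - g + γ) = ∫ z in Set.Ioi T, q2 z :=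
    calc ∫ y in Set.Ioi u, q2 (y - g + γ)
        = ∫ y, (Set.indicator (Set.Ioi u) fun y => q2 (y - g + γ)) y :=
          (integral_indicator measurableSet_Ioi).symm
      _ = ∫ y, Set.indicator (Set.Ioi T) q2 (y + (γ - g)) := by rw [hind2eq]
      _ = ∫ y, Set.indicator (Set.Ioi T) q2 y := integral_add_right_eq_self _ _
      _ = ∫ z in Set.Ioi T, q2 z := integral_indicator measurableSet_Ioi
  have h1c : IntegrableOn (fun _ : ℝ => (1 : ℝ)) (Set.Ioc γ T) :=
    integrableOn_const measure_Ioc_lt_top.ne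
  have h2c : IntegrableOn (fun z => (2 * p) * (lognormalCDF m v z - 1)) (Set.Ioc γ T) :=
    hILIoc.const_mul _
  have h3c : IntegrableOn (fun z => p ^ 2 * (lognormalCDF m v z - 1) ^ 2) (Set.Ioc γ T) :=
    hIsqIoc.const_mul _
  have hsplit1 : ∫ z in Set.Ioc γ T, q1 z
      = (∫ z in Set.Ioc γ T, (1 : ℝ))
        + (2 * p * (∫ z in Set.Ioc γ T, (lognormalCDF m v z - 1))
          + p ^ 2 * (∫ z in Set.Ioc γ T, (lognormalCDF m v z - 1) ^ 2)) := by
    have heq : ∀ z ∈ Set.Ioc γ T, q1 z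
        = 1 + ((2 * p) * (lognormalCDF m v z - 1) + p ^ 2 * (lognormalCDF m v z - 1) ^ 2) :=
      fun z _ => by simp only [hq1]; ring
    have h23 : IntegrableOn (fun z => 2 * p * (lognormalCDF m v z - 1)
        + p ^ 2 * (lognormalCDF m v z - 1) ^ 2) (Set.Ioc γ T) := h2c.add h3c
    rw [setIntegral_congr_fun measurableSet_Ioc heq, integral_add h1c h23,
      integral_add h2c h3c, integral_const_mul, integral_const_mul]
  have hone : ∫ z in Set.Ioc γ T, (1 : ℝ) = u - g := by
    rw [setIntegral_const, Real.volume_real_Ioc_of_le hγT, smul_eq_mul, mul_one,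
      hTdef]
    ring
  have hIoi : ∫ z in Set.Ioi γ, (lognormalCDF m v z - 1) ^ 2
      = (∫ z in Set.Ioc γ T, (lognormalCDF m v z - 1) ^ 2)
        + ∫ z in Set.Ioi T, (lognormalCDF m v z - 1) ^ 2 := by
    rw [← Set.Ioc_union_Ioi_eq_Ioi hγT,
      setIntegral_union (Set.Ioc_disjoint_Ioi le_rfl) measurableSet_Ioi hIsqIoc hIsqIoiT]
  have hq2int : ∫ z in Set.Ioi T, q2 z
      = p ^ 2 * ∫ z in Set.Ioi T, (lognormalCDF m v z - 1) ^ 2 := by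
    simp only [hq2]
    rw [integral_const_mul]
  rw [hA, hB, hsplit1, hone, hq2int, hIoi]
  ring
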